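/- arXiv:2512.00184 — 2 statements merged into one kernel-verified Lean document; each statement's English description precedes it below -/
import Mathlib

section
/- Let L : ℝⁿ → ℝ be a non-negative convex function with L(0) = 0 and L(x) > 0 for x ≠ 0. Then L satisfies the Δ₂-condition if and only if sup_{|x| ≥ 1} L′(x, x)/L(x) < ∞, where L′(x, θ) denotes the directional derivative of L at x in direction θ. Equivalently, L satisfies the Δ₂-condition if and only if sup_{|x| ≥ 1} sup_{y ∈ ∂L(x)} ⟨x, y⟩/L(x) < ∞. -/
/-- The subdifferential of `L` at `x`. -/
def subdiff {n : ℕ} (L : EuclideanSpace ℝ (Fin n) → ℝ) (x : EuclideanSpace ℝ (Fin n)) :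
    Set (EuclideanSpace ℝ (Fin n)) :=
  {y | ∀ z, L x + (inner ℝ y (z - x) : ℝ) ≤ L z}

/-- The directional derivative `L′(x, θ) = inf_{ε > 0} (L(x + εθ) − L(x))/ε`. -/
noncomputable def dirDeriv {n : ℕ} (L : EuclideanSpace ℝ (Fin n) → ℝ)
    (x θ : EuclideanSpace ℝ (Fin n)) : ℝ :=
  sInf ((fun ε : ℝ => (L (x + ε • θ) - L x) / ε) '' Set.Ioi 0)

/-!
Δ₂ bounds both quotients through the secant from `x` to `2 • x`. Conversely, convexity gives
`L z - L ((1 - s) • z) ≤ s * L'(z, z)` (a left secant slope lies below the right derivative), and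
`≤ s * ⟪z, y⟫` for every subgradient `y`; either bound thus yields
`L z - L ((1 - s) • z) ≤ s * M * L z` for `‖z‖ ≥ 1`. Walking from `x` to `2 • x` in `k ≥ 2 M` steps,
each of relative size at most `1 / k`, at most doubles `L` per step, so `L (2 • x) ≤ 2 ^ k * L x`.
Subgradients exist everywhere by Hahn–Banach, applied to the sublinear function `θ ↦ L'(x, θ)`.
-/

open Set Filter Topology

section DeltaTwo

variable {E : Type*} [NormedAddCommGroup E] [NormedSpace ℝ E] {L : E → ℝ}

def DeltaTwo (L : E → ℝ) : Prop :=
  ∃ C : ℝ, ∀ x : E, 1 ≤ ‖x‖ → L ((2 : ℝ) • x) ≤ C * L x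

variable {M : ℝ}
  (hM : ∀ z : E, 1 ≤ ‖z‖ → ∀ s : ℝ, 0 < s → L z - L ((1 - s) • z) ≤ s * M * L z)
include hM

theorem apply_one_add_smul_le_two_mul (hL : ∀ z, 0 ≤ L z) {x : E} (hx : 1 ≤ ‖x‖) {h : ℝ}
    (hh : 0 < h) (hMh : M * h ≤ 1 / 2) : L ((1 + h) • x) ≤ 2 * L x := by
  have hz : 1 ≤ ‖(1 + h) • x‖ := by
    rw [norm_smul, Real.norm_of_nonneg (by positivity)]
    nlinarith
  have hback : (1 - h / (1 + h)) • (1 + h) • x = x := by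
    rw [smul_smul, one_sub_div (by positivity), div_mul_cancel₀ _ (by positivity)]
    simp
  have hsM : h / (1 + h) * M ≤ 1 / 2 := by
    rcases le_total M 0 with hM0 | hM0
    · nlinarith [div_pos hh (by positivity : (0 : ℝ) < 1 + h)]
    · calc h / (1 + h) * M ≤ h * M := by gcongr; exact div_le_self hh.le (by linarith)
        _ ≤ 1 / 2 := by linarith
  have := hM _ hz (h / (1 + h)) (by positivity)
  rw [hback] at this
  nlinarith [hL ((1 + h) • x)]

theorem deltaTwo_of_sub_smul_le (hL : ∀ z, 0 ≤ L z) : DeltaTwo L := by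
  obtain ⟨k, hk⟩ := exists_nat_ge (2 * M)
  refine ⟨2 ^ (k + 1), fun x hx => ?_⟩
  have hk1 : (0 : ℝ) < k + 1 := by positivity
  have ray : ∀ i : ℕ, L ((1 + i / (k + 1 : ℝ)) • x) ≤ 2 ^ i * L x := by
    intro i
    induction i with
    | zero => simp
    | succ i ih =>
      have hi : (1 + (i + 1 : ℕ) / (k + 1 : ℝ)) • x =
          (1 + 1 / (k + 1 + i : ℝ)) • (1 + i / (k + 1 : ℝ)) • x := by
        rw [smul_smul]; congr 1; field_simp; push_cast; ring
      have hnorm : 1 ≤ ‖(1 + i / (k + 1 : ℝ)) • x‖ := by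
        rw [norm_smul, Real.norm_of_nonneg (by positivity)]
        nlinarith [(by positivity : (0 : ℝ) ≤ i / (k + 1))]
      have hstep : M * (1 / (k + 1 + i : ℝ)) ≤ 1 / 2 := by
        rw [mul_one_div, div_le_iff₀ (by positivity)]
        nlinarith [(Nat.cast_nonneg i : (0 : ℝ) ≤ i)]
      rw [hi, pow_succ]
      nlinarith [apply_one_add_smul_le_two_mul hM hL hnorm (by positivity) hstep]
  simpa [div_self hk1.ne', one_add_one_eq_two] using ray (k + 1)

end DeltaTwo

theorem ConvexOn.comp_add_smul {E : Type*} [AddCommGroup E] [Module ℝ E] {L : E → ℝ}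
    (hL : ConvexOn ℝ univ L) (x θ : E) : ConvexOn ℝ univ (fun t : ℝ => L (x + t • θ)) := by
  simpa [AffineMap.lineMap_apply, Function.comp_def, add_comm] using
    hL.comp_affineMap (AffineMap.lineMap x (x + θ))

section DirectionalDerivative

variable {n : ℕ} {L : EuclideanSpace ℝ (Fin n) → ℝ}

theorem dirDeriv_eq_derivWithin (hL : ConvexOn ℝ univ L) (x θ : EuclideanSpace ℝ (Fin n)) :
    dirDeriv L x θ = derivWithin (fun t : ℝ => L (x + t • θ)) (Ioi 0) 0 := by
  rw [(hL.comp_add_smul x θ).rightDeriv_eq_sInf_slope_of_mem_interior (by simp), dirDeriv,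
    slope_fun_def_field]
  simp [Ioi_def]

theorem dirDeriv_le_slope (hL : ConvexOn ℝ univ L) (x θ : EuclideanSpace ℝ (Fin n)) {ε : ℝ}
    (hε : 0 < ε) : dirDeriv L x θ ≤ (L (x + ε • θ) - L x) / ε := by
  have := (hL.comp_add_smul x θ).rightDeriv_le_slope_of_mem_interior (by simp) (mem_univ ε) hε
  simpa [← dirDeriv_eq_derivWithin hL, slope_def_field] using this

theorem slope_le_dirDeriv (hL : ConvexOn ℝ univ L) (x θ : EuclideanSpace ℝ (Fin n)) {s : ℝ}
    (hs : 0 < s) : (L x - L (x - s • θ)) / s ≤ dirDeriv L x θ := by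
  have hφ := hL.comp_add_smul x θ
  have := (hφ.slope_le_leftDeriv_of_mem_interior (mem_univ (-s)) (by simp) (neg_lt_zero.2 hs)).trans
    (hφ.leftDeriv_le_rightDeriv_of_mem_interior (by simp))
  simpa [← dirDeriv_eq_derivWithin hL, slope_def_field, sub_eq_add_neg] using this

theorem tendsto_slope_dirDeriv (hL : ConvexOn ℝ univ L) (x θ : EuclideanSpace ℝ (Fin n)) :
    Tendsto (fun ε : ℝ => (L (x + ε • θ) - L x) / ε) (𝓝[>] 0) (𝓝 (dirDeriv L x θ)) := by
  have := (hL.comp_add_smul x θ).hasDerivWithinAt_rightDeriv_of_mem_interior (x := 0) (by simp)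
  rw [hasDerivWithinAt_iff_tendsto_slope' self_notMem_Ioi, ← dirDeriv_eq_derivWithin hL] at this
  simpa [slope_fun_def_field] using this

theorem dirDeriv_zero_right (hL : ConvexOn ℝ univ L) (x : EuclideanSpace ℝ (Fin n)) :
    dirDeriv L x 0 = 0 := by
  simp [dirDeriv_eq_derivWithin hL]

theorem dirDeriv_smul (hL : ConvexOn ℝ univ L) (x θ : EuclideanSpace ℝ (Fin n)) {c : ℝ}
    (hc : 0 < c) : dirDeriv L x (c • θ) = c * dirDeriv L x θ := by
  have := derivWithin_comp_mul_left c (fun t : ℝ => L (x + t • θ)) (Ioi 0) 0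
  simp only [LinearOrderedField.smul_Ioi hc, mul_zero, smul_eq_mul] at this
  simpa [dirDeriv_eq_derivWithin hL, smul_smul, mul_comm] using this

theorem dirDeriv_add_le (hL : ConvexOn ℝ univ L) (x θ₁ θ₂ : EuclideanSpace ℝ (Fin n)) :
    dirDeriv L x (θ₁ + θ₂) ≤ dirDeriv L x θ₁ + dirDeriv L x θ₂ := by
  have midpoint : ∀ ε > (0 : ℝ), (L (x + ε • (θ₁ + θ₂)) - L x) / ε ≤
      2⁻¹ * ((L (x + ε • (2 : ℝ) • θ₁) - L x) / ε) +
        2⁻¹ * ((L (x + ε • (2 : ℝ) • θ₂) - L x) / ε) := by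
    intro ε hε
    have h := hL.2 (mem_univ (x + ε • (2 : ℝ) • θ₁)) (mem_univ (x + ε • (2 : ℝ) • θ₂))
      (by norm_num : (0 : ℝ) ≤ 2⁻¹) (by norm_num : (0 : ℝ) ≤ 2⁻¹) (by norm_num)
    have hmid : (2⁻¹ : ℝ) • (x + ε • (2 : ℝ) • θ₁) + (2⁻¹ : ℝ) • (x + ε • (2 : ℝ) • θ₂) =
        x + ε • (θ₁ + θ₂) := by module
    rw [hmid, smul_eq_mul, smul_eq_mul] at h
    rw [← mul_div_assoc, ← mul_div_assoc, ← add_div]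
    gcongr
    linarith
  have hlim := ((tendsto_slope_dirDeriv hL x ((2 : ℝ) • θ₁)).const_mul 2⁻¹).add
    ((tendsto_slope_dirDeriv hL x ((2 : ℝ) • θ₂)).const_mul 2⁻¹)
  rw [dirDeriv_smul hL x θ₁ two_pos, dirDeriv_smul hL x θ₂ two_pos, ← mul_assoc, ← mul_assoc,
    inv_mul_cancel₀ two_ne_zero, one_mul, one_mul] at hlim
  exact le_of_tendsto_of_tendsto (tendsto_slope_dirDeriv hL x (θ₁ + θ₂)) hlim
    (eventually_mem_nhdsWithin.mono midpoint)

theorem subdiff_nonempty (hL : ConvexOn ℝ univ L) (x : EuclideanSpace ℝ (Fin n)) :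
    (subdiff L x).Nonempty := by
  obtain ⟨g, -, hg⟩ := exists_extension_of_le_sublinear ⟨⊥, 0⟩ (dirDeriv L x)
    (fun c hc θ => dirDeriv_smul hL x θ hc) (dirDeriv_add_le hL x)
    (by rintro ⟨y, hy⟩; simp [(Submodule.mem_bot ℝ).1 hy, dirDeriv_zero_right hL])
  refine ⟨(InnerProductSpace.toDual ℝ _).symm (LinearMap.toContinuousLinearMap g), fun z => ?_⟩
  have := (hg (z - x)).trans (dirDeriv_le_slope hL x (z - x) one_pos)
  rw [InnerProductSpace.toDual_symm_apply]
  simp only [one_smul, add_sub_cancel, div_one] at this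
  change L x + g (z - x) ≤ L z
  linarith

end DirectionalDerivative

section SecantBounds

variable {n : ℕ} {L : EuclideanSpace ℝ (Fin n) → ℝ} {x y z : EuclideanSpace ℝ (Fin n)}

theorem sub_smul_le_dirDeriv (hL : ConvexOn ℝ univ L) (z : EuclideanSpace ℝ (Fin n)) {s : ℝ}
    (hs : 0 < s) : L z - L ((1 - s) • z) ≤ s * dirDeriv L z z := by
  have := slope_le_dirDeriv hL z z hs
  rwa [sub_smul, one_smul, mul_comm, ← div_le_iff₀ hs]

theorem sub_smul_le_inner_of_mem_subdiff (hy : y ∈ subdiff L z) (s : ℝ) :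
    L z - L ((1 - s) • z) ≤ s * inner ℝ z y := by
  have := hy ((1 - s) • z)
  rw [sub_smul, one_smul, sub_sub_cancel_left, inner_neg_right, inner_smul_right,
    real_inner_comm] at this
  rw [sub_smul, one_smul]
  linarith

theorem dirDeriv_self_le (hL : ConvexOn ℝ univ L) (x : EuclideanSpace ℝ (Fin n)) :
    dirDeriv L x x ≤ L ((2 : ℝ) • x) - L x := by
  simpa [two_smul] using dirDeriv_le_slope hL x x one_pos

theorem inner_le_of_mem_subdiff (hy : y ∈ subdiff L x) :
    inner ℝ x y ≤ L ((2 : ℝ) • x) - L x := by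
  have := hy ((2 : ℝ) • x)
  rw [two_smul, add_sub_cancel_right, real_inner_comm] at this
  rw [two_smul]
  linarith

end SecantBounds

theorem stmt7_general {n : ℕ} (L : EuclideanSpace ℝ (Fin n) → ℝ) (hconv : ConvexOn ℝ Set.univ L)
    (hnonneg : ∀ x, 0 ≤ L x) (hpos : ∀ x, x ≠ 0 → 0 < L x) :
    ((∃ C : ℝ, ∀ x : EuclideanSpace ℝ (Fin n), 1 ≤ ‖x‖ → L ((2 : ℝ) • x) ≤ C * L x) ↔
      (∃ M : ℝ, ∀ x : EuclideanSpace ℝ (Fin n), 1 ≤ ‖x‖ → dirDeriv L x x / L x ≤ M)) ∧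
    ((∃ C : ℝ, ∀ x : EuclideanSpace ℝ (Fin n), 1 ≤ ‖x‖ → L ((2 : ℝ) • x) ≤ C * L x) ↔
      (∃ M : ℝ, ∀ x : EuclideanSpace ℝ (Fin n), 1 ≤ ‖x‖ →
        ∀ y ∈ subdiff L x, (inner ℝ x y : ℝ) / L x ≤ M)) := by
  have hLpos : ∀ x : EuclideanSpace ℝ (Fin n), 1 ≤ ‖x‖ → 0 < L x := fun x hx =>
    hpos x (norm_ne_zero_iff.1 (by linarith))
  refine ⟨⟨?_, ?_⟩, ⟨?_, ?_⟩⟩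
  · rintro ⟨C, hC⟩
    refine ⟨C - 1, fun x hx => (div_le_iff₀ (hLpos x hx)).2 ?_⟩
    linarith [dirDeriv_self_le hconv x, hC x hx]
  · rintro ⟨M, hM⟩
    refine deltaTwo_of_sub_smul_le (M := M) (fun z hz s hs => ?_) hnonneg
    calc L z - L ((1 - s) • z) ≤ s * dirDeriv L z z := sub_smul_le_dirDeriv hconv z hs
      _ ≤ s * M * L z := by
        rw [mul_assoc]; gcongr; exact (div_le_iff₀ (hLpos z hz)).1 (hM z hz)
  · rintro ⟨C, hC⟩
    refine ⟨C - 1, fun x hx y hy => (div_le_iff₀ (hLpos x hx)).2 ?_⟩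
    linarith [inner_le_of_mem_subdiff hy, hC x hx]
  · rintro ⟨M, hM⟩
    refine deltaTwo_of_sub_smul_le (M := M) (fun z hz s hs => ?_) hnonneg
    obtain ⟨y, hy⟩ := subdiff_nonempty hconv z
    calc L z - L ((1 - s) • z) ≤ s * inner ℝ z y := sub_smul_le_inner_of_mem_subdiff hy s
      _ ≤ s * M * L z := by
        rw [mul_assoc]; gcongr; exact (div_le_iff₀ (hLpos z hz)).1 (hM z hz y hy)

theorem stmt7 {n : ℕ} (L : EuclideanSpace ℝ (Fin n) → ℝ) (hconv : ConvexOn ℝ Set.univ L)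
    (hnonneg : ∀ x, 0 ≤ L x) (h0 : L 0 = 0) (hpos : ∀ x, x ≠ 0 → 0 < L x) :
    ((∃ C : ℝ, ∀ x : EuclideanSpace ℝ (Fin n), 1 ≤ ‖x‖ → L ((2 : ℝ) • x) ≤ C * L x) ↔
      (∃ M : ℝ, ∀ x : EuclideanSpace ℝ (Fin n), 1 ≤ ‖x‖ → dirDeriv L x x / L x ≤ M)) ∧
    ((∃ C : ℝ, ∀ x : EuclideanSpace ℝ (Fin n), 1 ≤ ‖x‖ → L ((2 : ℝ) • x) ≤ C * L x) ↔
      (∃ M : ℝ, ∀ x : EuclideanSpace ℝ (Fin n), 1 ≤ ‖x‖ →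
        ∀ y ∈ subdiff L x, (inner ℝ x y : ℝ) / L x ≤ M)) :=
  stmt7_general L hconv hnonneg hpos
end

section
/- Let L : ℝⁿ → [0, ∞] be a lower semi-continuous convex function with L(0) = 0 and L(x) > 0 for all x ≠ 0, finite in some neighborhood of the origin, let u : Ω → ℝⁿ be a measurable function on a measurable space (Ω, 𝔐), and define S(λ) = ‖u‖_{L(λ)} on the set of probability measures λ on (Ω, 𝔐). Then S is quasi-concave: for probability measures λ₁, λ₂ and t₁, t₂ ≥ 0 with t₁ + t₂ = 1, S(t₁λ₁ + t₂λ₂) ≥ min{S(λ₁), S(λ₂)}. Moreover, if L is positively homogeneous of order p ≥ 1 (L(rx) = r^p L(x) for all r ≥ 0, x ∈ ℝⁿ), then S is concave: S(t₁λ₁ + t₂λ₂) ≥ t₁·S(λ₁) + t₂·S(λ₂). -/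
open MeasureTheory
open scoped ENNReal

/-- Convexity for an `[0, ∞]`-valued function on `ℝⁿ`. -/
def ConvexE {n : ℕ} (L : EuclideanSpace ℝ (Fin n) → ℝ≥0∞) : Prop :=
  ∀ x y : EuclideanSpace ℝ (Fin n), ∀ a b : ℝ, 0 ≤ a → 0 ≤ b → a + b = 1 →
    L (a • x + b • y) ≤ ENNReal.ofReal a * L x + ENNReal.ofReal b * L y

/-- The Luxemburg pseudo-norm `‖u‖_{L(λ)} = inf{r > 0 : ∫ L(u/r) dλ ≤ 1}` (equal to `∞`
when no such `r` exists). -/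
noncomputable def lux {n : ℕ} {Ω : Type*} [MeasurableSpace Ω] (μ : Measure Ω)
    (L : EuclideanSpace ℝ (Fin n) → ℝ≥0∞) (u : Ω → EuclideanSpace ℝ (Fin n)) : ℝ≥0∞ :=
  sInf (ENNReal.ofReal '' {r : ℝ | 0 < r ∧ ∫⁻ ω, L (r⁻¹ • u ω) ∂μ ≤ 1})

/-!
If `∫ L(u/r)` is at most `1` for the mixture `t₁λ₁ + t₂λ₂`, then, the integral being affine in
the measure, it is at most `1` for `λ₁` or for `λ₂`; hence `min (S λ₁) (S λ₂) ≤ r`. For `L`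
homogeneous of degree `p`, `S λ = (∫ L(u) dλ)^{1/p}` is the composition of an affine function of
`λ` with the concave, increasing function `x ↦ x^{1/p}`, hence concave.
-/

def IsHomogeneousOfDegree {E : Type*} [SMul ℝ E] (L : E → ℝ≥0∞) (p : ℝ) : Prop :=
  ∀ r : ℝ, 0 ≤ r → ∀ x, L (r • x) = ENNReal.ofReal (r ^ p) * L x

theorem ENNReal.min_le_mul_add_mul {a b x y : ℝ≥0∞} (hab : a + b = 1) :
    min x y ≤ a * x + b * y :=
  calc min x y = a * min x y + b * min x y := by rw [← add_mul, hab, one_mul]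
    _ ≤ a * x + b * y := by gcongr <;> simp

theorem ENNReal.mul_add_mul_rpow_inv_le {a b x y : ℝ≥0∞} (hab : a + b = 1) {p : ℝ}
    (hp : 1 ≤ p) :
    a * x ^ p⁻¹ + b * y ^ p⁻¹ ≤ (a * x + b * y) ^ p⁻¹ := by
  have hp0 : 0 < p := zero_lt_one.trans_le hp
  rw [ENNReal.le_rpow_inv_iff hp0]
  simpa only [ENNReal.rpow_inv_rpow hp0.ne'] using
    ENNReal.rpow_arith_mean_le_arith_mean2_rpow a b (x ^ p⁻¹) (y ^ p⁻¹) hab hp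

section Luxemburg

variable {n : ℕ} {Ω : Type*} [MeasurableSpace Ω] {μ ν : Measure Ω}
  {L : EuclideanSpace ℝ (Fin n) → ℝ≥0∞} {u : Ω → EuclideanSpace ℝ (Fin n)}

theorem lux_le_ofReal {r : ℝ} (hr : 0 < r) (h : ∫⁻ ω, L (r⁻¹ • u ω) ∂μ ≤ 1) :
    lux μ L u ≤ ENNReal.ofReal r :=
  sInf_le ⟨r, ⟨hr, h⟩, rfl⟩

theorem le_lux {b : ℝ≥0∞}
    (h : ∀ r : ℝ, 0 < r → ∫⁻ ω, L (r⁻¹ • u ω) ∂μ ≤ 1 → b ≤ ENNReal.ofReal r) :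
    b ≤ lux μ L u :=
  le_sInf <| by
    rintro _ ⟨r, ⟨hr, hint⟩, rfl⟩
    exact h r hr hint

theorem min_lux_le_lux_add_smul {a b : ℝ≥0∞} (hab : a + b = 1) :
    min (lux μ L u) (lux ν L u) ≤ lux (a • μ + b • ν) L u := by
  refine le_lux fun r hr hint => ?_
  rw [lintegral_add_measure, lintegral_smul_measure, lintegral_smul_measure] at hint
  rcases min_le_iff.mp ((ENNReal.min_le_mul_add_mul hab).trans hint) with hμ | hν
  · exact (min_le_left _ _).trans (lux_le_ofReal hr hμ)
  · exact (min_le_right _ _).trans (lux_le_ofReal hr hν)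

section Homogeneous

variable {p : ℝ}

theorem lintegral_inv_smul_le_one_iff (hL : IsHomogeneousOfDegree L p) (hp : 0 < p) {r : ℝ}
    (hr : 0 < r) :
    ∫⁻ ω, L (r⁻¹ • u ω) ∂μ ≤ 1 ↔ ∫⁻ ω, L (u ω) ∂μ ≤ ENNReal.ofReal r ^ p := by
  have hrp_ne_zero : ENNReal.ofReal r ^ p ≠ 0 := by
    simp [ENNReal.rpow_eq_zero_iff, hr, hp.not_gt]
  have hrp_ne_top : ENNReal.ofReal r ^ p ≠ ⊤ := by
    simp [ENNReal.rpow_eq_top_iff, hp.not_gt]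
  have hscale : ∀ ω, L (r⁻¹ • u ω) = (ENNReal.ofReal r ^ p)⁻¹ * L (u ω) := fun ω => by
    rw [hL r⁻¹ (inv_nonneg.mpr hr.le), Real.inv_rpow hr.le,
      ENNReal.ofReal_inv_of_pos (Real.rpow_pos_of_pos hr p), ENNReal.ofReal_rpow_of_pos hr]
  simp_rw [hscale]
  rw [lintegral_const_mul' _ _ (ENNReal.inv_ne_top.mpr hrp_ne_zero),
    ENNReal.inv_mul_le_iff hrp_ne_zero hrp_ne_top, mul_one]

theorem lux_eq_rpow_lintegral (hL : IsHomogeneousOfDegree L p) (hp : 0 < p) :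
    lux μ L u = (∫⁻ ω, L (u ω) ∂μ) ^ p⁻¹ := by
  refine le_antisymm (le_of_forall_gt_imp_ge_of_dense fun s hs => ?_)
    (le_lux fun r hr hint => ?_)
  · obtain ⟨r, -, hlt, hrs⟩ := ENNReal.lt_iff_exists_real_btwn.mp hs
    have hr : 0 < r := ENNReal.ofReal_pos.mp (hlt.trans_le' bot_le)
    refine (lux_le_ofReal hr ?_).trans hrs.le
    exact (lintegral_inv_smul_le_one_iff hL hp hr).mpr ((ENNReal.rpow_inv_le_iff hp).mp hlt.le)
  · exact (ENNReal.rpow_inv_le_iff hp).mpr ((lintegral_inv_smul_le_one_iff hL hp hr).mp hint)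

theorem mul_lux_add_mul_lux_le_lux_add_smul (hL : IsHomogeneousOfDegree L p) (hp : 1 ≤ p)
    {a b : ℝ≥0∞} (hab : a + b = 1) :
    a * lux μ L u + b * lux ν L u ≤ lux (a • μ + b • ν) L u := by
  have hp0 : 0 < p := zero_lt_one.trans_le hp
  simp only [lux_eq_rpow_lintegral hL hp0, lintegral_add_measure, lintegral_smul_measure,
    smul_eq_mul]
  exact ENNReal.mul_add_mul_rpow_inv_le hab hp

end Homogeneous

end Luxemburg

theorem stmt19_general {n : ℕ} {Ω : Type*} [MeasurableSpace Ω]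
    (L : EuclideanSpace ℝ (Fin n) → ℝ≥0∞)
    (u : Ω → EuclideanSpace ℝ (Fin n)) :
    (∀ lam1 lam2 : Measure Ω, IsProbabilityMeasure lam1 → IsProbabilityMeasure lam2 →
      ∀ t1 t2 : ℝ, 0 ≤ t1 → 0 ≤ t2 → t1 + t2 = 1 →
        min (lux lam1 L u) (lux lam2 L u) ≤
          lux (ENNReal.ofReal t1 • lam1 + ENNReal.ofReal t2 • lam2) L u) ∧
    (∀ p : ℝ, 1 ≤ p →
      (∀ r : ℝ, 0 ≤ r → ∀ x, L (r • x) = ENNReal.ofReal (r ^ p) * L x) →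
      ∀ lam1 lam2 : Measure Ω, IsProbabilityMeasure lam1 → IsProbabilityMeasure lam2 →
      ∀ t1 t2 : ℝ, 0 ≤ t1 → 0 ≤ t2 → t1 + t2 = 1 →
        ENNReal.ofReal t1 * lux lam1 L u + ENNReal.ofReal t2 * lux lam2 L u ≤
          lux (ENNReal.ofReal t1 • lam1 + ENNReal.ofReal t2 • lam2) L u) := by
  have weights_sum {t1 t2 : ℝ} (ht1 : 0 ≤ t1) (ht2 : 0 ≤ t2) (ht : t1 + t2 = 1) :
      ENNReal.ofReal t1 + ENNReal.ofReal t2 = 1 := by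
    rw [← ENNReal.ofReal_add ht1 ht2, ht, ENNReal.ofReal_one]
  constructor
  · intro lam1 lam2 _ _ t1 t2 ht1 ht2 ht
    exact min_lux_le_lux_add_smul (weights_sum ht1 ht2 ht)
  · intro p hp hL lam1 lam2 _ _ t1 t2 ht1 ht2 ht
    exact mul_lux_add_mul_lux_le_lux_add_smul hL hp (weights_sum ht1 ht2 ht)

theorem stmt19 {n : ℕ} {Ω : Type*} [MeasurableSpace Ω]
    (L : EuclideanSpace ℝ (Fin n) → ℝ≥0∞)
    (hconv : ConvexE L) (hlsc : LowerSemicontinuous L) (h0 : L 0 = 0)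
    (hpos : ∀ x, x ≠ 0 → 0 < L x)
    (hfin : ∃ δ : ℝ, 0 < δ ∧ ∀ x : EuclideanSpace ℝ (Fin n), ‖x‖ < δ → L x ≠ ⊤)
    (u : Ω → EuclideanSpace ℝ (Fin n)) (hu : Measurable u) :
    (∀ lam1 lam2 : Measure Ω, IsProbabilityMeasure lam1 → IsProbabilityMeasure lam2 →
      ∀ t1 t2 : ℝ, 0 ≤ t1 → 0 ≤ t2 → t1 + t2 = 1 →
        min (lux lam1 L u) (lux lam2 L u) ≤
          lux (ENNReal.ofReal t1 • lam1 + ENNReal.ofReal t2 • lam2) L u) ∧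
    (∀ p : ℝ, 1 ≤ p →
      (∀ r : ℝ, 0 ≤ r → ∀ x, L (r • x) = ENNReal.ofReal (r ^ p) * L x) →
      ∀ lam1 lam2 : Measure Ω, IsProbabilityMeasure lam1 → IsProbabilityMeasure lam2 →
      ∀ t1 t2 : ℝ, 0 ≤ t1 → 0 ≤ t2 → t1 + t2 = 1 →
        ENNReal.ofReal t1 * lux lam1 L u + ENNReal.ofReal t2 * lux lam2 L u ≤
          lux (ENNReal.ofReal t1 • lam1 + ENNReal.ofReal t2 • lam2) L u) :=
  stmt19_general L u
end
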